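/- Let G be an AH-algebra and let g,h ∈ G. Then: (i) −1 ≤ g ≤ 1 if and only if g² ≤ 1; (ii) ‖g²‖ = ‖g‖²; (iii) ‖|g|‖ = ‖g‖; (iv) if gCh, then ‖gh‖ ≤ ‖g‖·‖h‖. -/

import Mathlib

/-- An e-ring `(R,E)`: an associative ring `R` with unity together with a set `E ⊆ R`
of effects, satisfying the Foulis axioms.  `E⁺` is realized as the additive submonoid
closure of `E` (the set of all finite sums of effects). -/
structure ERing (R : Type*) [Ring R] where
  E : Set R
  zero_mem : (0 : R) ∈ E
  one_mem : (1 : R) ∈ E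
  compl_mem : ∀ e ∈ E, 1 - e ∈ E
  epos_i : ∀ a ∈ AddSubmonoid.closure E, -a ∈ AddSubmonoid.closure E → a = 0
  epos_ii : ∀ a ∈ AddSubmonoid.closure E, 1 - a ∈ AddSubmonoid.closure E → a ∈ E
  epos_iii : ∀ a ∈ AddSubmonoid.closure E, ∀ b ∈ AddSubmonoid.closure E,
    a * b = b * a → a * b ∈ AddSubmonoid.closure E
  epos_iv : ∀ a ∈ AddSubmonoid.closure E, ∀ b ∈ AddSubmonoid.closure E,
    a * b * a ∈ AddSubmonoid.closure E
  epos_v : ∀ a ∈ AddSubmonoid.closure E, ∀ b ∈ AddSubmonoid.closure E,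
    a * b * a = 0 → a * b = 0 ∧ b * a = 0
  epos_vi : ∀ a ∈ AddSubmonoid.closure E, ∀ b ∈ AddSubmonoid.closure E,
    (a - b) ^ 2 ∈ AddSubmonoid.closure E
  zero_ne_one : (0 : R) ≠ 1

namespace ERing

variable {R : Type*} [Ring R] (er : ERing R)

/-- `E⁺`, the set of all finite sums of effects; the positive cone of the directed group. -/
def Epos : Set R := (AddSubmonoid.closure er.E : Set R)

/-- The directed group `G = E⁺ - E⁺` of the e-ring. -/
def G : Set R := {g | ∃ a ∈ er.Epos, ∃ b ∈ er.Epos, g = a - b}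

/-- The partial order on the directed group: `g ≤ h` iff `h - g ∈ E⁺`. -/
def le (g h : R) : Prop := h - g ∈ er.Epos

/-- The set of projections `P = {p ∈ G : p = p²}`. -/
def P : Set R := {p | p ∈ er.G ∧ p = p ^ 2}

/-- The commutant in `G` of a subset `A ⊆ G`. -/
def commutant (A : Set R) : Set R := {g | g ∈ er.G ∧ ∀ a ∈ A, g * a = a * g}

/-- The bicommutant in `G` of a subset `A ⊆ G`. -/
def CC (A : Set R) : Set R := er.commutant (er.commutant A)

/-- `s` is the supremum of `A` within the subset `S` (w.r.t. the e-ring order). -/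
def IsSupIn (S A : Set R) (s : R) : Prop :=
  s ∈ S ∧ (∀ a ∈ A, er.le a s) ∧ ∀ b ∈ S, (∀ a ∈ A, er.le a b) → er.le s b

/-- `s` is the infimum of `A` within the subset `S` (w.r.t. the e-ring order). -/
def IsInfIn (S A : Set R) (s : R) : Prop :=
  s ∈ S ∧ (∀ a ∈ A, er.le s a) ∧ ∀ b ∈ S, (∀ a ∈ A, er.le b a) → er.le b s

/-- Quadratic annihilation property. -/
def HasQA : Prop := ∀ g ∈ er.G, ∀ h ∈ er.G, g * h ^ 2 * g = 0 → g * h = 0 ∧ h * g = 0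

/-- Commutative Vigier property: every ascending sequence of pairwise commuting elements
of `G` bounded above in `G` has a supremum in `G` which double commutes with the sequence. -/
def HasCV : Prop :=
  ∀ g : ℕ → R, (∀ n, g n ∈ er.G) → (∀ n, er.le (g n) (g (n + 1))) →
    (∀ m n, g m * g n = g n * g m) → (∃ b ∈ er.G, ∀ n, er.le (g n) b) →
    ∃ s, er.IsSupIn er.G (Set.range g) s ∧ s ∈ er.CC (Set.range g)

/-- `G` is an abstract Hermitian (AH) algebra: there is a semitransparent effect `½`,
`G` has quadratic annihilation, and `G` has the commutative Vigier property. -/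
def IsAH : Prop := (∃ h ∈ er.E, h + h = 1) ∧ er.HasQA ∧ er.HasCV

end ERing

namespace ERing

variable {R : Type*} [Ring R] (er : ERing R)

/-- `m` is the absolute value `|g| = (g²)^(1/2)` of `g`: `m ∈ G`, `0 ≤ m`, `m² = g²`. -/
def IsAbs (g m : R) : Prop := m ∈ er.G ∧ er.le 0 m ∧ m ^ 2 = g ^ 2

/-- `a` is the positive part `g⁺ = ½(|g| + g)` of `g`, i.e. `a ∈ G` and `a + a = |g| + g`. -/
def IsPosPart (g a : R) : Prop := a ∈ er.G ∧ ∃ m, er.IsAbs g m ∧ a + a = m + g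

/-- `b` is the negative part `g⁻ = ½(|g| − g)` of `g`, i.e. `b ∈ G` and `b + b = |g| − g`. -/
def IsNegPart (g b : R) : Prop := b ∈ er.G ∧ ∃ m, er.IsAbs g m ∧ b + b = m - g

/-- `p` is the carrier projection `g°` of `g`. -/
def IsCarrier (g p : R) : Prop := p ∈ er.P ∧ ∀ h ∈ er.G, (g * h = 0 ↔ p * h = 0)

end ERing

namespace ERing

variable {R : Type*} [Ring R] [Algebra ℝ R] (er : ERing R)

/-- The 1-norm `‖g‖ = inf {λ : 0 ≤ λ, −λ·1 ≤ g ≤ λ·1}`. -/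
noncomputable def norm1 (g : R) : ℝ :=
  sInf {l : ℝ | 0 ≤ l ∧ er.le (-(l • (1 : R))) g ∧ er.le g (l • (1 : R))}

/-- The spectral lower bound `L_g = sup {λ : λ·1 ≤ g}`. -/
noncomputable def specL (g : R) : ℝ := sSup {l : ℝ | er.le (l • (1 : R)) g}

/-- The spectral upper bound `U_g = inf {λ : g ≤ λ·1}`. -/
noncomputable def specU (g : R) : ℝ := sInf {l : ℝ | er.le g (l • (1 : R))}

/-- `p` is the spectral projection `p_{g,λ} = 1 − ((g − λ·1)⁺)°`. -/
def IsSpecProj (g : R) (l : ℝ) (p : R) : Prop :=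
  ∃ a, er.IsPosPart (g - l • (1 : R)) a ∧ ∃ q, er.IsCarrier a q ∧ p = 1 - q

/-- `d` is the λ-eigenprojection `d_{g,λ} = 1 − (g − λ·1)°`. -/
def IsEigenProj (g : R) (l : ℝ) (d : R) : Prop :=
  ∃ q, er.IsCarrier (g - l • (1 : R)) q ∧ d = 1 - q

end ERing

/-!
Everything reduces to two facts about order intervals `[-λ, λ]`. If `g` and `h` commute,
`-a ≤ g ≤ a` and `-b ≤ h ≤ b`, then `ab ∓ gh` is half a sum of two products of commuting
positive elements, so `-ab ≤ gh ≤ ab`. Conversely, `g² ≤ λ²` with `λ > 0` gives `g ≤ λ`,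
because `2λ(λ - g) = (λ - g)² + (λ² - g²)`. As the set of such `λ` is upward closed, the first
fact gives `‖gh‖ ≤ ‖g‖‖h‖` (and with `h = g`, `‖g²‖ ≤ ‖g‖²`), the second `‖g‖² ≤ ‖g²‖`.
-/
namespace ERing

open Filter Topology

variable {R : Type*} [Ring R]

section Cone

variable (er : ERing R)

lemma zero_mem_Epos : (0 : R) ∈ er.Epos := (AddSubmonoid.closure er.E).zero_mem

lemma one_mem_Epos : (1 : R) ∈ er.Epos := AddSubmonoid.subset_closure er.one_mem

variable {er}

lemma add_mem_Epos {a b : R} (ha : a ∈ er.Epos) (hb : b ∈ er.Epos) : a + b ∈ er.Epos :=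
  (AddSubmonoid.closure er.E).add_mem ha hb

lemma mul_mem_Epos {a b : R} (ha : a ∈ er.Epos) (hb : b ∈ er.Epos) (hab : Commute a b) :
    a * b ∈ er.Epos :=
  er.epos_iii a ha b hb hab

lemma mem_G_of_mem_Epos {a : R} (ha : a ∈ er.Epos) : a ∈ er.G :=
  ⟨a, ha, 0, er.zero_mem_Epos, (sub_zero a).symm⟩

lemma sub_mem_G {g h : R} (hg : g ∈ er.G) (hh : h ∈ er.G) : g - h ∈ er.G := by
  obtain ⟨a, ha, b, hb, rfl⟩ := hg
  obtain ⟨c, hc, d, hd, rfl⟩ := hh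
  exact ⟨a + d, add_mem_Epos ha hd, b + c, add_mem_Epos hb hc, by abel⟩

lemma neg_mem_G {g : R} (hg : g ∈ er.G) : -g ∈ er.G := by
  simpa using sub_mem_G (mem_G_of_mem_Epos er.zero_mem_Epos) hg

lemma sq_mem_Epos {g : R} (hg : g ∈ er.G) : g ^ 2 ∈ er.Epos := by
  obtain ⟨a, ha, b, hb, rfl⟩ := hg
  exact er.epos_vi a ha b hb

lemma exists_natCast_sub_mem_Epos {a : R} (ha : a ∈ er.Epos) :
    ∃ n : ℕ, (n : R) - a ∈ er.Epos := by
  induction ha using AddSubmonoid.closure_induction with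
  | mem e he => exact ⟨1, by simpa [Epos] using AddSubmonoid.subset_closure (er.compl_mem e he)⟩
  | zero => exact ⟨0, by simpa using er.zero_mem_Epos⟩
  | add x y _ _ hx hy =>
    obtain ⟨n, hn⟩ := hx
    obtain ⟨m, hm⟩ := hy
    exact ⟨n + m, by simpa [add_sub_add_comm] using add_mem_Epos hn hm⟩

lemma natCast_mem_Epos (n : ℕ) : (n : R) ∈ er.Epos := by
  simpa [Epos] using (AddSubmonoid.closure er.E).nsmul_mem er.one_mem_Epos n

end Cone

section RealScalars

variable [Algebra ℝ R] (er : ERing R)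

def SMulNonnegClosed : Prop := ∀ l : ℝ, 0 ≤ l → ∀ a ∈ er.Epos, l • a ∈ er.Epos

def normSet (g : R) : Set ℝ := {l | 0 ≤ l ∧ er.le (-(l • (1 : R))) g ∧ er.le g (l • (1 : R))}

variable {er}

lemma mem_normSet_iff {g : R} {l : ℝ} :
    l ∈ er.normSet g ↔ 0 ≤ l ∧ l • (1 : R) + g ∈ er.Epos ∧ l • (1 : R) - g ∈ er.Epos := by
  simp only [normSet, le, Set.mem_ofPred_eq, sub_neg_eq_add, add_comm g]

lemma mem_Epos_of_add_self_mem (hscal : er.SMulNonnegClosed) {x : R}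
    (hx : x + x ∈ er.Epos) : x ∈ er.Epos := by
  have hhalf : (2⁻¹ : ℝ) • (x + x) = x := by
    rw [← two_smul ℝ x, smul_smul, inv_mul_cancel₀ two_ne_zero, one_smul]
  simpa only [hhalf] using hscal 2⁻¹ (by norm_num) _ hx

/-- `ab - gh = ½((a - g)(b + h) + (a + g)(b - h))`. -/
lemma smul_one_sub_mul_mem_Epos (hscal : er.SMulNonnegClosed) {g h : R} {a b : ℝ}
    (hgh : Commute g h) (hg₁ : a • (1 : R) + g ∈ er.Epos) (hg₂ : a • (1 : R) - g ∈ er.Epos)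
    (hh₁ : b • (1 : R) + h ∈ er.Epos) (hh₂ : b • (1 : R) - h ∈ er.Epos) :
    (a * b) • (1 : R) - g * h ∈ er.Epos := by
  have hscalar : ∀ (c : ℝ) (x : R), Commute (c • (1 : R)) x :=
    fun c x => (Commute.one_left x).smul_left c
  have hsum := add_mem_Epos
    (mul_mem_Epos hg₂ hh₁ (((hscalar a _).sub_left (hscalar b g).symm).add_right
      ((hscalar a h).sub_left hgh)))
    (mul_mem_Epos hg₁ hh₂ (((hscalar a _).add_left (hscalar b g).symm).sub_right
      ((hscalar a h).add_left hgh)))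
  refine mem_Epos_of_add_self_mem hscal ?_
  convert hsum using 1
  simp only [sub_mul, mul_add, add_mul, mul_sub, smul_mul_assoc, mul_smul_comm, one_mul,
    mul_one]
  module

lemma mul_mem_normSet (hscal : er.SMulNonnegClosed) {g h : R} {a b : ℝ}
    (hgh : Commute g h) (ha : a ∈ er.normSet g) (hb : b ∈ er.normSet h) :
    a * b ∈ er.normSet (g * h) := by
  obtain ⟨ha₀, hg₁, hg₂⟩ := mem_normSet_iff.mp ha
  obtain ⟨hb₀, hh₁, hh₂⟩ := mem_normSet_iff.mp hb
  refine mem_normSet_iff.mpr ⟨mul_nonneg ha₀ hb₀, ?_,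
    smul_one_sub_mul_mem_Epos hscal hgh hg₁ hg₂ hh₁ hh₂⟩
  simpa using smul_one_sub_mul_mem_Epos hscal hgh.neg_right hg₁ hg₂
    (by simpa [← sub_eq_add_neg] using hh₂) (by simpa using hh₁)

lemma smul_one_sub_mem_Epos_of_sq (hscal : er.SMulNonnegClosed) {g : R} (hg : g ∈ er.G)
    {l : ℝ} (hl : 0 < l) (hsq : er.le (g ^ 2) ((l ^ 2) • (1 : R))) :
    l • (1 : R) - g ∈ er.Epos := by
  have hsum := add_mem_Epos
    (sq_mem_Epos (sub_mem_G (mem_G_of_mem_Epos (hscal l hl.le _ er.one_mem_Epos)) hg)) hsq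
  have hid : (l • (1 : R) - g) ^ 2 + ((l ^ 2) • (1 : R) - g ^ 2)
      = (2 * l) • (l • (1 : R) - g) := by
    simp only [sq, sub_mul, mul_sub, smul_mul_assoc, mul_smul_comm, one_mul, mul_one]
    module
  rw [hid] at hsum
  have hl₂ : (2 * l)⁻¹ * (2 * l) = 1 := inv_mul_cancel₀ (by positivity)
  have hscaled := hscal (2 * l)⁻¹ (by positivity) _ hsum
  rwa [smul_smul, hl₂, one_smul] at hscaled

lemma mem_normSet_of_sq_le (hscal : er.SMulNonnegClosed) {g : R} (hg : g ∈ er.G)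
    {l : ℝ} (hl : 0 < l) (hsq : er.le (g ^ 2) ((l ^ 2) • (1 : R))) : l ∈ er.normSet g := by
  refine mem_normSet_iff.mpr ⟨hl.le, ?_, smul_one_sub_mem_Epos_of_sq hscal hg hl hsq⟩
  simpa using smul_one_sub_mem_Epos_of_sq hscal (neg_mem_G hg) hl (by simpa using hsq)

lemma normSet_nonempty {g : R} (hg : g ∈ er.G) : (er.normSet g).Nonempty := by
  obtain ⟨a, ha, b, hb, rfl⟩ := hg
  obtain ⟨n, hn⟩ := exists_natCast_sub_mem_Epos ha
  obtain ⟨m, hm⟩ := exists_natCast_sub_mem_Epos hb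
  have hcast : ((n + m : ℕ) : ℝ) • (1 : R) = n + m := by
    rw [Nat.cast_smul_eq_nsmul, nsmul_one, Nat.cast_add]
  refine ⟨(n + m : ℕ), mem_normSet_iff.mpr ⟨by positivity, ?_, ?_⟩⟩ <;> rw [hcast]
  · convert add_mem_Epos (add_mem_Epos hm (er.natCast_mem_Epos n)) ha using 1
    abel
  · convert add_mem_Epos (add_mem_Epos hn (er.natCast_mem_Epos m)) hb using 1
    abel

lemma normSet_mono (hscal : er.SMulNonnegClosed) {g : R} {l l' : ℝ}
    (hl : l ∈ er.normSet g) (hll' : l ≤ l') : l' ∈ er.normSet g := by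
  obtain ⟨hl₀, h₁, h₂⟩ := mem_normSet_iff.mp hl
  have hgap := hscal (l' - l) (sub_nonneg.mpr hll') _ er.one_mem_Epos
  refine mem_normSet_iff.mpr ⟨hl₀.trans hll', ?_, ?_⟩
  · convert add_mem_Epos hgap h₁ using 1
    rw [sub_smul]; abel
  · convert add_mem_Epos hgap h₂ using 1
    rw [sub_smul]; abel

lemma mem_normSet_of_norm1_lt (hscal : er.SMulNonnegClosed) {g : R} (hg : g ∈ er.G) {l : ℝ}
    (hl : er.norm1 g < l) : l ∈ er.normSet g := by
  obtain ⟨l', hl', hl'l⟩ := exists_lt_of_csInf_lt (normSet_nonempty hg) hl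
  exact normSet_mono hscal hl' hl'l.le

lemma norm1_le_of_forall_lt {g : R} {c : ℝ} (h : ∀ l, c < l → l ∈ er.normSet g) :
    er.norm1 g ≤ c :=
  le_of_forall_gt_imp_ge_of_dense fun l hl => csInf_le ⟨0, fun _ hl => hl.1⟩ (h l hl)

lemma norm1_nonneg (g : R) : 0 ≤ er.norm1 g := Real.sInf_nonneg fun _ hl => hl.1

lemma norm1_mul_le (hscal : er.SMulNonnegClosed) {g h : R} (hg : g ∈ er.G) (hh : h ∈ er.G)
    (hgh : Commute g h) : er.norm1 (g * h) ≤ er.norm1 g * er.norm1 h := by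
  refine norm1_le_of_forall_lt fun l hl => ?_
  have hlim : Tendsto (fun ε : ℝ => (er.norm1 g + ε) * (er.norm1 h + ε)) (𝓝[>] 0)
      (𝓝 (er.norm1 g * er.norm1 h)) := by
    refine tendsto_nhdsWithin_of_tendsto_nhds (Continuous.tendsto' ?_ 0 _ (by simp))
    fun_prop
  obtain ⟨ε, hεl, hε⟩ :=
    ((hlim.eventually (gt_mem_nhds hl)).and self_mem_nhdsWithin).exists
  exact normSet_mono hscal (mul_mem_normSet hscal hgh
    (mem_normSet_of_norm1_lt hscal hg (lt_add_of_pos_right _ hε))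
    (mem_normSet_of_norm1_lt hscal hh (lt_add_of_pos_right _ hε))) hεl.le

lemma norm1_sq (hscal : er.SMulNonnegClosed) {g : R} (hg : g ∈ er.G) :
    er.norm1 (g ^ 2) = er.norm1 g ^ 2 := by
  refine le_antisymm (by simpa only [sq] using norm1_mul_le hscal hg hg (Commute.refl g)) ?_
  have hsqrt : er.norm1 g ≤ √(er.norm1 (g ^ 2)) := norm1_le_of_forall_lt fun l hl => by
    have hl₀ : 0 < l := (Real.sqrt_nonneg _).trans_lt hl
    exact mem_normSet_of_sq_le hscal hg hl₀ (mem_normSet_of_norm1_lt hscal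
      (mem_G_of_mem_Epos (sq_mem_Epos hg)) ((Real.sqrt_lt' hl₀).mp hl)).2.2
  exact (Real.le_sqrt (norm1_nonneg g) (norm1_nonneg _)).mp hsqrt

lemma norm1_eq_of_sq_eq (hscal : er.SMulNonnegClosed) {g m : R} (hg : g ∈ er.G)
    (hm : m ∈ er.G) (hmg : m ^ 2 = g ^ 2) : er.norm1 m = er.norm1 g :=
  (pow_left_inj₀ (norm1_nonneg m) (norm1_nonneg g) two_ne_zero).mp <| by
    rw [← norm1_sq hscal hm, ← norm1_sq hscal hg, hmg]

lemma neg_one_le_and_le_one_iff_sq_le_one (hscal : er.SMulNonnegClosed) {g : R}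
    (hg : g ∈ er.G) : (er.le (-1) g ∧ er.le g 1) ↔ er.le (g ^ 2) 1 := by
  have hone : 1 ∈ er.normSet g ↔ er.le (-1) g ∧ er.le g 1 := by
    simp only [normSet, one_smul, Set.mem_ofPred_eq, zero_le_one, true_and]
  rw [← hone]
  constructor
  · intro h
    simpa only [sq, mul_one, one_smul] using (mul_mem_normSet hscal (Commute.refl g) h h).2.2
  · exact fun h => mem_normSet_of_sq_le hscal hg one_pos (by simpa only [one_pow, one_smul] using h)

end RealScalars

end ERing

theorem stmt13_general {R : Type*} [Ring R] [Algebra ℝ R] (er : ERing R)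
    (hscal : ∀ l : ℝ, 0 ≤ l → ∀ a ∈ er.Epos, l • a ∈ er.Epos)
    (g h : R) (hg : g ∈ er.G) (hh : h ∈ er.G) :
    ((er.le (-1) g ∧ er.le g 1) ↔ er.le (g ^ 2) 1) ∧
    er.norm1 (g ^ 2) = er.norm1 g ^ 2 ∧
    (∀ m, er.IsAbs g m → er.norm1 m = er.norm1 g) ∧
    (g * h = h * g → er.norm1 (g * h) ≤ er.norm1 g * er.norm1 h) :=
  ⟨er.neg_one_le_and_le_one_iff_sq_le_one hscal hg, er.norm1_sq hscal hg,
    fun _ hm => er.norm1_eq_of_sq_eq hscal hg hm.1 hm.2.2, er.norm1_mul_le hscal hg hh⟩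

/-- In an AH-algebra (with real scalars): (i) `−1 ≤ g ≤ 1` iff
`g² ≤ 1`; (ii) `‖g²‖ = ‖g‖²`; (iii) `‖|g|‖ = ‖g‖`; (iv) if `gCh` then
`‖gh‖ ≤ ‖g‖·‖h‖`. -/
theorem stmt13 {R : Type*} [Ring R] [Algebra ℝ R] (er : ERing R) (hAH : er.IsAH)
    (hscal : ∀ l : ℝ, 0 ≤ l → ∀ a ∈ er.Epos, l • a ∈ er.Epos)
    (g h : R) (hg : g ∈ er.G) (hh : h ∈ er.G) :
    ((er.le (-1) g ∧ er.le g 1) ↔ er.le (g ^ 2) 1) ∧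
    er.norm1 (g ^ 2) = er.norm1 g ^ 2 ∧
    (∀ m, er.IsAbs g m → er.norm1 m = er.norm1 g) ∧
    (g * h = h * g → er.norm1 (g * h) ≤ er.norm1 g * er.norm1 h) :=
  stmt13_general er hscal g h hg hh
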